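/- arXiv:1803.08704 — 3 statements merged into one kernel-verified Lean document; each statement's English description precedes it below -/
import Mathlib

section
/- Let g ≥ 1 and n ≥ 1 be integers with (n : ℝ) ≤ 2g² − 16g·√(g+3). Then there exist natural numbers n_1, n_2, n_3, n_4, n_5 such that n − 1 = (2n_1² − n_1) + n_2² + n_3² + n_4² + n_5² and n_1 + n_2 + n_3 + n_4 + n_5 ≤ g − 1. -/
/-!
Write `n - 1 = (2k² - k) + r` with `0 ≤ r ≤ 4k`, which is possible because consecutive values
of `2k² - k` differ by `4k + 1`, and split `r` into four squares `a² + b² + c² + d²`; by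
Cauchy–Schwarz `a + b + c + d ≤ 2√r ≤ 4√k`. It remains to see that `k + 4√k ≤ g - 1`: with
`t = √(g + 3)`, the bound on `n` forces `k ≤ g - 4t`, and then `16k ≤ 16t² - 64t - 48 < (4t - 1)²`.
-/

theorem exists_eq_two_mul_sq_sub_self_add_le (M : ℕ) :
    ∃ k r : ℕ, r ≤ 4 * k ∧ (M : ℤ) = 2 * (k : ℤ) ^ 2 - k + r := by
  induction M with
  | zero => exact ⟨0, 0, le_rfl, by simp⟩
  | succ M ih =>
    obtain ⟨k, r, hr, hM⟩ := ih
    rcases Nat.lt_or_ge r (4 * k) with hlt | hge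
    · exact ⟨k, r + 1, hlt, by push_cast; linarith⟩
    · refine ⟨k + 1, 0, Nat.zero_le _, ?_⟩
      have hr : r = 4 * k := le_antisymm hr hge
      subst hr
      push_cast at hM ⊢
      linear_combination hM

theorem exists_sum_four_squares_eq_and_sq_sum_le (r : ℕ) :
    ∃ a b c d : ℕ, a ^ 2 + b ^ 2 + c ^ 2 + d ^ 2 = r ∧ (a + b + c + d) ^ 2 ≤ 4 * r := by
  obtain ⟨a, b, c, d, h⟩ := Nat.sum_four_squares r
  refine ⟨a, b, c, d, h, ?_⟩
  rw [← h]
  zify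
  nlinarith [sq_nonneg ((a : ℤ) - b), sq_nonneg ((a : ℤ) - c), sq_nonneg ((a : ℤ) - d),
    sq_nonneg ((b : ℤ) - c), sq_nonneg ((b : ℤ) - d), sq_nonneg ((c : ℤ) - d)]

theorem exists_eq_two_mul_sq_sub_self_add_four_squares (M : ℕ) :
    ∃ k a b c d : ℕ, (M : ℤ) = 2 * (k : ℤ) ^ 2 - k + a ^ 2 + b ^ 2 + c ^ 2 + d ^ 2 ∧
      (a + b + c + d) ^ 2 ≤ 16 * k := by
  obtain ⟨k, r, hrk, hM⟩ := exists_eq_two_mul_sq_sub_self_add_le M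
  obtain ⟨a, b, c, d, hr, hsum⟩ := exists_sum_four_squares_eq_and_sq_sum_le r
  refine ⟨k, a, b, c, d, ?_, by omega⟩
  rw [hM, ← hr]
  push_cast
  ring

theorem add_le_sub_one_of_two_mul_sq_sub_le {g x s : ℝ} (hg : 0 ≤ g) (hs : s ^ 2 ≤ 16 * x)
    (h : 2 * x ^ 2 - x ≤ 2 * g ^ 2 - 16 * g * √(g + 3) - 1) :
    x + s ≤ g - 1 := by
  set t := √(g + 3)
  have ht : t ^ 2 = g + 3 := Real.sq_sqrt (by linarith)
  have ht0 : 0 ≤ t := Real.sqrt_nonneg _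
  have hgt : 8 * t < g := by
    by_contra! hle
    nlinarith [mul_nonneg hg (sub_nonneg.2 hle), sq_nonneg (4 * x - 1)]
  have ht8 : 8 < t := by nlinarith
  -- `y ↦ 2y² - y` is increasing for `y ≥ 1/4` and already exceeds the bound at `y = g - 4t`.
  have hxg : x ≤ g - 4 * t := by
    by_contra! hlt
    nlinarith [mul_pos (sub_pos.2 hlt) (show 0 < 2 * x + 2 * (g - 4 * t) - 1 by linarith)]
  have hst : s ≤ 4 * t - 1 := by
    by_contra! hlt
    nlinarith
  linarith

/-- Arithmetic core of Theorem 5.1: if `1 ≤ n ≤ 2g² − 16g√(g+3)`, then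
`n − 1 = (2n₁² − n₁) + n₂² + n₃² + n₄² + n₅²` with `n₁ + ⋯ + n₅ ≤ g − 1`. -/
theorem stmt_13 (g n : ℤ) (hg : 1 ≤ g) (hn : 1 ≤ n)
    (h : (n : ℝ) ≤ 2 * (g : ℝ) ^ 2 - 16 * (g : ℝ) * Real.sqrt ((g : ℝ) + 3)) :
    ∃ n1 n2 n3 n4 n5 : ℕ,
      n - 1 = (2 * (n1 : ℤ) ^ 2 - (n1 : ℤ)) + (n2 : ℤ) ^ 2 + (n3 : ℤ) ^ 2
        + (n4 : ℤ) ^ 2 + (n5 : ℤ) ^ 2 ∧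
      (n1 : ℤ) + n2 + n3 + n4 + n5 ≤ g - 1 := by
  lift n - 1 to ℕ using (by omega) with M hM
  obtain ⟨k, a, b, c, d, hdecomp, hsum⟩ := exists_eq_two_mul_sq_sub_self_add_four_squares M
  refine ⟨k, a, b, c, d, by linear_combination hdecomp, ?_⟩
  have hk : 2 * (k : ℤ) ^ 2 - k ≤ n - 1 := by
    rw [← hM, hdecomp]
    linarith [sq_nonneg (a : ℤ), sq_nonneg (b : ℤ), sq_nonneg (c : ℤ), sq_nonneg (d : ℤ)]
  have hkR : 2 * (k : ℝ) ^ 2 - k ≤ n - 1 := by exact_mod_cast hk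
  have hg0 : (0 : ℝ) ≤ g := by exact_mod_cast (show (0 : ℤ) ≤ g by omega)
  have hsumR : ((a + b + c + d : ℕ) : ℝ) ^ 2 ≤ 16 * k := by exact_mod_cast hsum
  have hbound := add_le_sub_one_of_two_mul_sq_sub_le hg0 hsumR (by linarith)
  push_cast at hbound
  exact_mod_cast (by linarith : (k : ℝ) + a + b + c + d ≤ g - 1)
end

section
/- For each integer g ≥ 1 define A_g := { n ∈ ℕ : 1 ≤ n ≤ 2g² − g and there exist natural numbers n_1, …, n_5 with n − 1 = (2n_1² − n_1) + n_2² + n_3² + n_4² + n_5² and n_1 + ⋯ + n_5 ≤ g − 1 }. Then the ratio #A_g / (2g² − g) tends to 1 as g → ∞. -/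
/-!
Write `m = n - 1` greedily as `m = h k + r` with `h k = 2k² - k` the largest hexagonal number
`≤ m`. Then `r < h (k + 1) - h k = 4k + 1`, and by Lagrange `r` is a sum of four squares, each at
most `√r ≤ √(4k)`. Hence every `n ≤ h u` is decomposable with `n₁ + ⋯ + n₅ ≤ u - 1 + 4√(4u)`, so
`A_g ⊇ [1, h u]` for `u = g - 4√(4g)`. As `h g - h u ≤ 4g(g - u) = O(g^{3/2})` and `h g ≥ g²`,
the density of `A_g` is at least `1 - 32/√g`.
-/

open Filter Topology

def hexagonal (k : ℕ) : ℕ := 2 * k ^ 2 - k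

lemma hexagonal_succ (k : ℕ) : hexagonal (k + 1) = hexagonal k + 4 * k + 1 := by
  unfold hexagonal
  have : k ≤ 2 * k ^ 2 := by nlinarith
  have : 2 * (k + 1) ^ 2 = 2 * k ^ 2 + 4 * k + 2 := by ring
  omega

lemma hexagonal_strictMono : StrictMono hexagonal :=
  strictMono_nat_of_lt_succ fun k => by rw [hexagonal_succ]; omega

lemma cast_hexagonal {R : Type*} [Ring R] (k : ℕ) : (hexagonal k : R) = 2 * (k : R) ^ 2 - k := by
  have : k ≤ 2 * k ^ 2 := by nlinarith
  simp [hexagonal, Nat.cast_sub this]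

lemma sq_le_hexagonal (k : ℕ) : k ^ 2 ≤ hexagonal k := by
  zify [cast_hexagonal (R := ℤ)]
  nlinarith

lemma hexagonal_le_add_mul_sub {u g : ℕ} (h : u ≤ g) :
    hexagonal g ≤ hexagonal u + 4 * g * (g - u) := by
  zify [cast_hexagonal (R := ℤ), h]
  nlinarith

lemma exists_hexagonal_le_lt_succ (m : ℕ) : ∃ k, hexagonal k ≤ m ∧ m < hexagonal (k + 1) := by
  obtain ⟨k, hk, hk'⟩ := hexagonal_strictMono.exists_between_of_tendsto_atTop
    hexagonal_strictMono.tendsto_atTop (x := m + 1) (by simp [hexagonal])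
  exact ⟨k, Nat.lt_succ_iff.mp hk, hk'⟩

lemma exists_sum_four_sq_le_four_mul_sqrt (r : ℕ) :
    ∃ a b c d : ℕ, a ^ 2 + b ^ 2 + c ^ 2 + d ^ 2 = r ∧ a + b + c + d ≤ 4 * Nat.sqrt r := by
  obtain ⟨a, b, c, d, h⟩ := Nat.sum_four_squares r
  have ha : a ≤ r.sqrt := Nat.le_sqrt'.mpr (by omega)
  have hb : b ≤ r.sqrt := Nat.le_sqrt'.mpr (by omega)
  have hc : c ≤ r.sqrt := Nat.le_sqrt'.mpr (by omega)
  have hd : d ≤ r.sqrt := Nat.le_sqrt'.mpr (by omega)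
  exact ⟨a, b, c, d, h, by omega⟩

lemma exists_eq_hexagonal_add_sum_four_sq (m : ℕ) :
    ∃ k a b c d : ℕ, m = hexagonal k + (a ^ 2 + b ^ 2 + c ^ 2 + d ^ 2) ∧
      a + b + c + d ≤ 4 * Nat.sqrt (4 * k) := by
  obtain ⟨k, hle, hlt⟩ := exists_hexagonal_le_lt_succ m
  obtain ⟨a, b, c, d, hr, hsum⟩ := exists_sum_four_sq_le_four_mul_sqrt (m - hexagonal k)
  have hrk : m - hexagonal k ≤ 4 * k := by rw [hexagonal_succ] at hlt; omega
  exact ⟨k, a, b, c, d, by omega, hsum.trans (by gcongr)⟩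

def realizableSet (g : ℕ) : Set ℕ :=
  {n : ℕ | 1 ≤ n ∧ n ≤ 2 * g ^ 2 - g ∧
    ∃ n1 n2 n3 n4 n5 : ℕ,
      (n : ℤ) - 1 = (2 * (n1 : ℤ) ^ 2 - (n1 : ℤ)) + (n2 : ℤ) ^ 2
        + (n3 : ℤ) ^ 2 + (n4 : ℤ) ^ 2 + (n5 : ℤ) ^ 2 ∧
      (n1 : ℤ) + n2 + n3 + n4 + n5 ≤ (g : ℤ) - 1}

lemma realizableSet_subset_Icc (g : ℕ) : realizableSet g ⊆ Set.Icc 1 (hexagonal g) :=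
  fun _ hn => ⟨hn.1, hn.2.1⟩

lemma Icc_subset_realizableSet {u g : ℕ} (hug : u + 4 * Nat.sqrt (4 * u) ≤ g) :
    Set.Icc 1 (hexagonal u) ⊆ realizableSet g := by
  rintro n ⟨hn1, hnu⟩
  obtain ⟨k, a, b, c, d, hdecomp, hsum⟩ := exists_eq_hexagonal_add_sum_four_sq (n - 1)
  have hku : k < u := hexagonal_strictMono.lt_iff_lt.mp (by omega)
  have hsqrt : Nat.sqrt (4 * k) ≤ Nat.sqrt (4 * u) := Nat.sqrt_le_sqrt (by omega)
  refine ⟨hn1, hnu.trans (hexagonal_strictMono.monotone (by omega)), k, a, b, c, d, ?_, by omega⟩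
  rw [← cast_hexagonal, ← Nat.cast_one, ← Nat.cast_sub hn1, hdecomp]
  push_cast
  ring

lemma hexagonal_sub_le_ncard_realizableSet (g : ℕ) :
    hexagonal (g - 4 * Nat.sqrt (4 * g)) ≤ (realizableSet g).ncard := by
  set u := g - 4 * Nat.sqrt (4 * g)
  have hug : u + 4 * Nat.sqrt (4 * u) ≤ g := by
    rcases Nat.eq_zero_or_pos u with hu | hu
    · simp [hu]
    · have : Nat.sqrt (4 * u) ≤ Nat.sqrt (4 * g) := Nat.sqrt_le_sqrt (by omega)
      omega
  calc hexagonal u = (Set.Icc 1 (hexagonal u)).ncard := by simp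
    _ ≤ (realizableSet g).ncard :=
      Set.ncard_le_ncard (Icc_subset_realizableSet hug) ((Set.finite_Icc _ _).subset
        (realizableSet_subset_Icc g))

lemma ncard_realizableSet_le_hexagonal (g : ℕ) : (realizableSet g).ncard ≤ hexagonal g := by
  simpa using Set.ncard_le_ncard (realizableSet_subset_Icc g) (Set.finite_Icc _ _)

lemma hexagonal_le_ncard_realizableSet_add (g : ℕ) :
    hexagonal g ≤ (realizableSet g).ncard + 16 * g * Nat.sqrt (4 * g) := by
  set s := Nat.sqrt (4 * g)
  calc hexagonal g ≤ hexagonal (g - 4 * s) + 4 * g * (g - (g - 4 * s)) :=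
        hexagonal_le_add_mul_sub (Nat.sub_le g (4 * s))
    _ ≤ (realizableSet g).ncard + 4 * g * (4 * s) := by
        gcongr
        · exact hexagonal_sub_le_ncard_realizableSet g
        · omega
    _ = (realizableSet g).ncard + 16 * g * s := by ring

lemma one_sub_le_ncard_realizableSet_div {g : ℕ} (hg : 0 < g) :
    1 - 32 / Real.sqrt g ≤ ((realizableSet g).ncard : ℝ) / hexagonal g := by
  set s := Nat.sqrt (4 * g)
  have hdeficit : (hexagonal g : ℝ) ≤ (realizableSet g).ncard + 16 * g * s := by
    exact_mod_cast hexagonal_le_ncard_realizableSet_add g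
  have hH : (g : ℝ) ^ 2 ≤ hexagonal g := by exact_mod_cast sq_le_hexagonal g
  have hs : (s : ℝ) ≤ 2 * Real.sqrt g := by
    calc (s : ℝ) ≤ Real.sqrt (4 * g : ℕ) := Real.nat_sqrt_le_real_sqrt
      _ = 2 * Real.sqrt g := by
        push_cast
        rw [Real.sqrt_mul zero_le_four, show (4 : ℝ) = 2 ^ 2 by norm_num,
          Real.sqrt_sq zero_le_two]
  have hg' : (0 : ℝ) < g := by exact_mod_cast hg
  have hw : 0 < Real.sqrt g := Real.sqrt_pos.mpr hg'
  have hwsq : Real.sqrt g ^ 2 = g := Real.sq_sqrt hg'.le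
  rw [le_div_iff₀ ((pow_pos hg' 2).trans_le hH), sub_mul, one_mul, div_mul_eq_mul_div,
    sub_le_iff_le_add, ← sub_le_iff_le_add', le_div_iff₀ hw]
  calc ((hexagonal g : ℝ) - (realizableSet g).ncard) * Real.sqrt g
      ≤ 16 * g * s * Real.sqrt g := by gcongr; linarith
    _ ≤ 16 * g * (2 * Real.sqrt g) * Real.sqrt g := by gcongr
    _ = 32 * g ^ 2 := by linear_combination 32 * (g : ℝ) * hwsq
    _ ≤ 32 * hexagonal g := by gcongr

/-- Asymptotic density of realizable Picard numbers (Theorem 5.1):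
`#A_g / (2g² − g) → 1` as `g → ∞`, where `A_g` is the set of
`n ∈ [1, 2g² − g]` admitting a decomposition
`n − 1 = (2n₁² − n₁) + n₂² + n₃² + n₄² + n₅²` with `n₁ + ⋯ + n₅ ≤ g − 1`. -/
theorem stmt_14 :
    Filter.Tendsto
      (fun g : ℕ =>
        ((Set.ncard {n : ℕ | 1 ≤ n ∧ n ≤ 2 * g ^ 2 - g ∧
          ∃ n1 n2 n3 n4 n5 : ℕ,
            (n : ℤ) - 1 = (2 * (n1 : ℤ) ^ 2 - (n1 : ℤ)) + (n2 : ℤ) ^ 2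
              + (n3 : ℤ) ^ 2 + (n4 : ℤ) ^ 2 + (n5 : ℤ) ^ 2 ∧
            (n1 : ℤ) + n2 + n3 + n4 + n5 ≤ (g : ℤ) - 1} : ℕ) : ℝ)
          / (2 * (g : ℝ) ^ 2 - g))
      Filter.atTop (nhds 1) := by
  change Tendsto (fun g : ℕ => ((realizableSet g).ncard : ℝ) / (2 * (g : ℝ) ^ 2 - g)) atTop (𝓝 1)
  simp_rw [← cast_hexagonal]
  have hlower : Tendsto (fun g : ℕ => 1 - 32 / Real.sqrt g) atTop (𝓝 1) := by
    simpa using tendsto_const_nhds.sub <|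
      (Real.tendsto_sqrt_atTop.comp tendsto_natCast_atTop_atTop).const_div_atTop (32 : ℝ)
  refine tendsto_of_tendsto_of_tendsto_of_le_of_le' hlower tendsto_const_nhds ?_ ?_
  · filter_upwards [eventually_gt_atTop 0] with g hg
    exact one_sub_le_ncard_realizableSet_div hg
  · exact Eventually.of_forall fun g =>
      div_le_one_of_le₀ (by exact_mod_cast ncard_realizableSet_le_hexagonal g) (Nat.cast_nonneg _)
end

section
/- Let g ≥ 5 be an integer and let n be an integer with 0 ≤ n ≤ g − 1. Then the two inequalities g² < [2(g−n)² − (g−n)] + 1 and [2(g−n−1)² − (g−n−1)] + (n+1)² < [2(g−n)² − (g−n)] + 1 both hold if and only if (n : ℝ) < min( (4g − 1 − √(8g² − 7))/4 , √(4g + 6) − 3 ). -/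
/-! With `m = g - n`, condition (1) reads `8g² - 7 < (4m - 1)²` and, since the quadratics in
condition (2) telescope to `4m - 2`, condition (2) reads `(n + 3)² < 4g + 6`. As `4m - 1 > 0` and
`n + 3 > 0`, taking square roots turns these into the two upper bounds on `n`. -/

theorem sq_lt_two_mul_sq_sub_add_one_iff {g n : ℝ} (hn : 4 * n < 4 * g - 1) :
    g ^ 2 < 2 * (g - n) ^ 2 - (g - n) + 1 ↔ n < (4 * g - 1 - √(8 * g ^ 2 - 7)) / 4 := by
  calc g ^ 2 < 2 * (g - n) ^ 2 - (g - n) + 1 ↔ 8 * g ^ 2 - 7 < (4 * (g - n) - 1) ^ 2 := by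
        constructor <;> intro h <;> linarith
    _ ↔ √(8 * g ^ 2 - 7) < 4 * (g - n) - 1 := (Real.sqrt_lt' (by linarith)).symm
    _ ↔ n < (4 * g - 1 - √(8 * g ^ 2 - 7)) / 4 := by constructor <;> intro h <;> linarith

theorem two_mul_sq_sub_add_sq_lt_iff {g n : ℝ} (hn : -3 ≤ n) :
    2 * (g - n - 1) ^ 2 - (g - n - 1) + (n + 1) ^ 2 < 2 * (g - n) ^ 2 - (g - n) + 1 ↔
      n + 3 < √(4 * g + 6) := by
  rw [Real.lt_sqrt (by linarith)]
  constructor <;> intro h <;> linarith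

theorem stmt_18_general (g n : ℤ) (hn1 : 0 ≤ n) (hn2 : n ≤ g - 1) :
    (g ^ 2 < (2 * (g - n) ^ 2 - (g - n)) + 1 ∧
      (2 * (g - n - 1) ^ 2 - (g - n - 1)) + (n + 1) ^ 2
        < (2 * (g - n) ^ 2 - (g - n)) + 1) ↔
      (n : ℝ) < min ((4 * (g : ℝ) - 1 - Real.sqrt (8 * (g : ℝ) ^ 2 - 7)) / 4)
        (Real.sqrt (4 * (g : ℝ) + 6) - 3) := by
  have hn_lt : 4 * (n : ℝ) < 4 * g - 1 := by exact_mod_cast (by omega : 4 * n < 4 * g - 1)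
  have hn_ge : (-3 : ℝ) ≤ n := by exact_mod_cast (by omega : -3 ≤ n)
  rw [lt_min_iff, ← sq_lt_two_mul_sq_sub_add_one_iff hn_lt, lt_sub_iff_add_lt,
    ← two_mul_sq_sub_add_sq_lt_iff hn_ge]
  exact_mod_cast Iff.rfl

/-- Lemma 5.2 in arithmetic form: for `g ≥ 5` and `0 ≤ n ≤ g − 1`, the two
numerical conditions defining large Picard numbers hold simultaneously iff
`n < min( (4g − 1 − √(8g² − 7))/4 , √(4g+6) − 3 )`. -/
theorem stmt_18 (g n : ℤ) (hg : 5 ≤ g) (hn1 : 0 ≤ n) (hn2 : n ≤ g - 1) :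
    (g ^ 2 < (2 * (g - n) ^ 2 - (g - n)) + 1 ∧
      (2 * (g - n - 1) ^ 2 - (g - n - 1)) + (n + 1) ^ 2
        < (2 * (g - n) ^ 2 - (g - n)) + 1) ↔
      (n : ℝ) < min ((4 * (g : ℝ) - 1 - Real.sqrt (8 * (g : ℝ) ^ 2 - 7)) / 4)
        (Real.sqrt (4 * (g : ℝ) + 6) - 3) :=
  stmt_18_general g n hn1 hn2
end
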